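/- arXiv:1304.0737 — 4 statements merged into one kernel-verified Lean document; each statement's English description precedes it below -/
import Mathlib

section
/- Let 𝔡 be a quadratic Lie algebra, 𝔠 ⊆ 𝔡 a coisotropic Lie subalgebra, and 𝔥 ⊆ 𝔡 a Lagrangian Lie subalgebra. Then 𝔥_𝔠 := ((𝔥 ∩ 𝔠) + 𝔠⊥)/𝔠⊥ is a Lagrangian Lie subalgebra of the reduced quadratic Lie algebra 𝔡_𝔠 = 𝔠/𝔠⊥: it is a Lie subalgebra of 𝔠/𝔠⊥ and it equals its own orthogonal complement with respect to the induced form. Equivalently, (𝔥 ∩ 𝔠) + 𝔠⊥ is a Lagrangian Lie subalgebra of 𝔡 containing 𝔠⊥. -/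
/-!
Invariance of the form makes `𝔠⊥` an ideal of `𝔠`, which gives closure under the bracket.
The Lagrangian property is lattice algebra: for a nondegenerate form in finite dimension `⊥`
exchanges `⊓` and `⊔`, so `((𝔥 ⊓ 𝔠) ⊔ 𝔠⊥)⊥ = (𝔥 ⊔ 𝔠⊥) ⊓ 𝔠`, and this is `(𝔥 ⊓ 𝔠) ⊔ 𝔠⊥` by the
modular law, since `𝔠⊥ ≤ 𝔠`.
-/

namespace LinearMap.BilinForm

lemma orthogonal_sup {R M : Type*} [CommRing R] [AddCommGroup M] [Module R M]
    (B : LinearMap.BilinForm R M) (S T : Submodule R M) :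
    B.orthogonal (S ⊔ T) = B.orthogonal S ⊓ B.orthogonal T := by
  refine le_antisymm (le_inf (orthogonal_le le_sup_left) (orthogonal_le le_sup_right)) ?_
  rintro x ⟨hxS, hxT⟩ n hn
  obtain ⟨s, hs, t, ht, rfl⟩ := Submodule.mem_sup.mp hn
  rw [map_add, LinearMap.add_apply, hxS s hs, hxT t ht, add_zero]

variable {K V : Type*} [Field K] [AddCommGroup V] [Module K V] [FiniteDimensional K V]
  {B : LinearMap.BilinForm K V}

lemma orthogonal_inf (hB : B.Nondegenerate) (hB₀ : B.IsRefl) (S T : Submodule K V) :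
    B.orthogonal (S ⊓ T) = B.orthogonal S ⊔ B.orthogonal T := by
  conv_lhs => rw [← B.orthogonal_orthogonal hB hB₀ S, ← B.orthogonal_orthogonal hB hB₀ T,
    ← orthogonal_sup]
  exact B.orthogonal_orthogonal hB hB₀ _

lemma orthogonal_inf_sup_orthogonal (hB : B.Nondegenerate) (hB₀ : B.IsRefl)
    {S C : Submodule K V} (hS : B.orthogonal S = S) (hC : B.orthogonal C ≤ C) :
    B.orthogonal (S ⊓ C ⊔ B.orthogonal C) = S ⊓ C ⊔ B.orthogonal C := by
  rw [orthogonal_sup, orthogonal_inf hB hB₀, hS, B.orthogonal_orthogonal hB hB₀,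
    sup_comm S, sup_inf_assoc_of_le _ hC, sup_comm]

end LinearMap.BilinForm

namespace LieSubalgebra

variable {R L : Type*} [CommRing R] [LieRing L] [LieAlgebra R L] {B : LinearMap.BilinForm R L}

lemma lie_mem_orthogonal (hB : B.lieInvariant L) {c : LieSubalgebra R L} {x y : L}
    (hx : x ∈ c) (hy : y ∈ B.orthogonal c.toSubmodule) :
    ⁅x, y⁆ ∈ B.orthogonal c.toSubmodule := by
  intro n hn
  rw [← neg_eq_zero, ← hB, hy _ (c.lie_mem hx hn)]

lemma lie_mem_sup_orthogonal (hB : B.lieInvariant L) {k c : LieSubalgebra R L} (hkc : k ≤ c)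
    (hc : B.orthogonal c.toSubmodule ≤ c.toSubmodule) {x y : L}
    (hx : x ∈ k.toSubmodule ⊔ B.orthogonal c.toSubmodule)
    (hy : y ∈ k.toSubmodule ⊔ B.orthogonal c.toSubmodule) :
    ⁅x, y⁆ ∈ k.toSubmodule ⊔ B.orthogonal c.toSubmodule := by
  obtain ⟨a, ha, u, hu, rfl⟩ := Submodule.mem_sup.mp hx
  obtain ⟨b, hb, v, hv, rfl⟩ := Submodule.mem_sup.mp hy
  have hub : ⁅u, b⁆ ∈ B.orthogonal c.toSubmodule := by
    rw [← lie_skew]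
    exact neg_mem (lie_mem_orthogonal hB (hkc hb) hu)
  rw [add_lie, lie_add, lie_add]
  exact add_mem
    (add_mem (Submodule.mem_sup_left (k.lie_mem ha hb))
      (Submodule.mem_sup_right (lie_mem_orthogonal hB (hkc ha) hv)))
    (add_mem (Submodule.mem_sup_right hub)
      (Submodule.mem_sup_right (lie_mem_orthogonal hB (hc hu) hv)))

end LieSubalgebra

/-- Let `𝔡` be a quadratic Lie algebra, `𝔠 ⊆ 𝔡` a coisotropic Lie subalgebra and
`𝔥 ⊆ 𝔡` a Lagrangian Lie subalgebra.  Then `(𝔥 ∩ 𝔠) + 𝔠⊥` is a Lagrangian Lie subalgebra of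
`𝔡` containing `𝔠⊥`; equivalently, `𝔥_𝔠 = ((𝔥 ∩ 𝔠) + 𝔠⊥)/𝔠⊥` is a Lagrangian Lie subalgebra
of the reduced quadratic Lie algebra `𝔡_𝔠 = 𝔠/𝔠⊥`. -/
theorem lagrangian_reduction
    {D : Type*} [LieRing D] [LieAlgebra ℝ D] [FiniteDimensional ℝ D]
    (B : LinearMap.BilinForm ℝ D) (hsymm : B.IsSymm) (hnondeg : B.Nondegenerate)
    (hinv : ∀ x y z : D, B ⁅x, y⁆ z + B y ⁅x, z⁆ = 0)
    (c h : LieSubalgebra ℝ D)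
    (hcois : B.orthogonal c.toSubmodule ≤ c.toSubmodule)
    (hlag : B.orthogonal h.toSubmodule = h.toSubmodule) :
    -- `(𝔥 ∩ 𝔠) + 𝔠⊥` is closed under the Lie bracket,
    (∀ x ∈ (h.toSubmodule ⊓ c.toSubmodule) ⊔ B.orthogonal c.toSubmodule,
      ∀ y ∈ (h.toSubmodule ⊓ c.toSubmodule) ⊔ B.orthogonal c.toSubmodule,
        ⁅x, y⁆ ∈ (h.toSubmodule ⊓ c.toSubmodule) ⊔ B.orthogonal c.toSubmodule) ∧
    -- it is Lagrangian,
    B.orthogonal ((h.toSubmodule ⊓ c.toSubmodule) ⊔ B.orthogonal c.toSubmodule)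
      = (h.toSubmodule ⊓ c.toSubmodule) ⊔ B.orthogonal c.toSubmodule ∧
    -- and it contains `𝔠⊥`.
    B.orthogonal c.toSubmodule
      ≤ (h.toSubmodule ⊓ c.toSubmodule) ⊔ B.orthogonal c.toSubmodule := by
  have hB : B.lieInvariant D := fun x y z ↦ eq_neg_of_add_eq_zero_left (hinv x y z)
  refine ⟨fun x hx y hy ↦ ?_,
    B.orthogonal_inf_sup_orthogonal hnondeg hsymm.isRefl hlag hcois, le_sup_right⟩
  exact LieSubalgebra.lie_mem_sup_orthogonal (k := h ⊓ c) hB inf_le_right hcois hx hy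
end

section
/- Let 𝔡 be a quadratic Lie algebra, 𝔥 ⊆ 𝔡 a Lagrangian Lie subalgebra, and 𝔠 ⊆ 𝔡 a coisotropic Lie subalgebra; write 𝔥_𝔠 = ((𝔥 ∩ 𝔠) + 𝔠⊥)/𝔠⊥ ⊆ 𝔠/𝔠⊥. Suppose W ⊆ 𝔠/𝔠⊥ is a Lagrangian subspace with respect to the induced form such that W ⊕ 𝔥_𝔠 = 𝔠/𝔠⊥, and let 𝔨′ ⊆ 𝔠 be the preimage of W under the quotient map 𝔠 → 𝔠/𝔠⊥. Then: (a) 𝔨′ is a Lagrangian subspace of 𝔡, i.e. 𝔨′ = (𝔨′)⊥; (b) 𝔥 + 𝔨′ = 𝔥 + 𝔠; (c) 𝔥 ∩ 𝔨′ = 𝔥 ∩ 𝔠⊥. -/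
/-- The orthogonal complement of `𝔠`, regarded as a submodule of `𝔠`. -/
noncomputable def cperpIn {D : Type*} [LieRing D] [LieAlgebra ℝ D]
    (B : LinearMap.BilinForm ℝ D) (c : LieSubalgebra ℝ D) :
    Submodule ℝ c.toSubmodule :=
  (B.orthogonal c.toSubmodule).comap c.toSubmodule.subtype

/-!
Everything happens inside `𝔠`, where `𝔨′` is the full preimage of `W` under the quotient map
by `𝔠⊥`. Since `𝔠⊥ ⊆ 𝔨′ ⊆ 𝔠`, we get `𝔨′⊥ ⊆ 𝔠⊥⊥ = 𝔠`, and as the form on `𝔠` is pulled back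
from the reduction, `𝔨′⊥` is the preimage of `W⊥ = W`. Parts (b) and (c) are
`W + 𝔥_𝔠 = 𝔠/𝔠⊥` and `W ∩ 𝔥_𝔠 = 0` pulled back along the quotient map.
-/

namespace Submodule

variable {R E : Type*} [Ring R] [AddCommGroup E] [Module R E] {N M : Submodule R E}
  {W : Submodule R (E ⧸ N)}

theorem comap_mkQ_sup_eq_top (hW : W ⊔ M.map N.mkQ = ⊤) : W.comap N.mkQ ⊔ M = ⊤ := by
  rw [← sup_eq_right.mpr (le_sup_of_le_left (le_comap_mkQ N W)), ← map_mkQ_eq_top, map_sup,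
    map_comap_eq_of_surjective N.mkQ_surjective, hW]

theorem comap_mkQ_inf_eq (hW : Disjoint W (M.map N.mkQ)) : W.comap N.mkQ ⊓ M = N ⊓ M := by
  refine le_antisymm (fun x ⟨hxW, hxM⟩ => ⟨?_, hxM⟩) (inf_le_inf_right M (le_comap_mkQ N W))
  exact (Quotient.mk_eq_zero N).mp (hW.le_bot ⟨hxW, mem_map_of_mem hxM⟩)

variable {V : Type*} [AddCommGroup V] [Module R V] {C H : Submodule R V} {N : Submodule R C}
  {W : Submodule R (C ⧸ N)}

theorem coe_mem_map_subtype_comap_mkQ_iff (y : C) :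
    (y : V) ∈ (W.comap N.mkQ).map C.subtype ↔ N.mkQ y ∈ W := by
  simp

theorem sup_map_subtype_comap_mkQ (hW : W ⊔ ((H ⊓ C).comap C.subtype).map N.mkQ = ⊤) :
    H ⊔ (W.comap N.mkQ).map C.subtype = H ⊔ C := by
  have hC := congrArg (map C.subtype) (comap_mkQ_sup_eq_top hW)
  rw [map_sup, map_subtype_top, map_comap_subtype] at hC
  refine le_antisymm (sup_le_sup_left (map_subtype_le C _) H) (sup_le le_sup_left ?_)
  exact hC.ge.trans <| sup_le le_sup_right (le_sup_of_le_left (inf_le_right.trans inf_le_left))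

theorem inf_map_subtype_comap_mkQ (hW : Disjoint W (((H ⊓ C).comap C.subtype).map N.mkQ)) :
    H ⊓ (W.comap N.mkQ).map C.subtype = H ⊓ N.map C.subtype := by
  have hC := congrArg (map C.subtype) (comap_mkQ_inf_eq hW)
  rw [map_inf _ C.injective_subtype, map_inf _ C.injective_subtype, map_comap_subtype] at hC
  have hrestrict : ∀ X ≤ C, H ⊓ X = X ⊓ (C ⊓ (H ⊓ C)) := fun X hX => by
    rw [inf_eq_right.mpr inf_le_right, inf_comm H C, ← inf_assoc, inf_eq_left.mpr hX, inf_comm]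
  rw [hrestrict _ (map_subtype_le C _), hrestrict _ (map_subtype_le C _), hC]

end Submodule

namespace LinearMap.BilinForm

section

variable {R V : Type*} [CommRing R] [AddCommGroup V] [Module R V] {B : LinearMap.BilinForm R V}
  {C : Submodule R V}

theorem coe_mem_orthogonal_map_subtype_comap_mkQ_iff {N : Submodule R C}
    {B' : LinearMap.BilinForm R (C ⧸ N)} {W : Submodule R (C ⧸ N)}
    (hB' : ∀ x y : C, B' (Submodule.Quotient.mk x) (Submodule.Quotient.mk y) = B x y) (y : C) :
    (y : V) ∈ B.orthogonal ((W.comap N.mkQ).map C.subtype) ↔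
      Submodule.Quotient.mk y ∈ B'.orthogonal W := by
  simp only [mem_orthogonal_iff]
  constructor
  · intro hy w hw
    obtain ⟨z, rfl⟩ := N.mkQ_surjective w
    rw [Submodule.mkQ_apply, hB']
    exact hy z ((Submodule.coe_mem_map_subtype_comap_mkQ_iff z).mpr hw)
  · rintro hy _ ⟨z, hz, rfl⟩
    rw [Submodule.subtype_apply, ← hB']
    exact hy _ hz

end

section

variable {K V : Type*} [Field K] [AddCommGroup V] [Module K V] [FiniteDimensional K V]
  {B : LinearMap.BilinForm K V} {C : Submodule K V}

theorem orthogonal_map_subtype_comap_mkQ_eq_self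
    (hnd : B.Nondegenerate) (hrefl : B.IsRefl) (hcois : B.orthogonal C ≤ C)
    {B' : LinearMap.BilinForm K (C ⧸ (B.orthogonal C).comap C.subtype)}
    {W : Submodule K (C ⧸ (B.orthogonal C).comap C.subtype)}
    (hB' : ∀ x y : C, B' (Submodule.Quotient.mk x) (Submodule.Quotient.mk y) = B x y)
    (hW : B'.orthogonal W = W) :
    B.orthogonal ((W.comap (Submodule.mkQ _)).map C.subtype) =
      (W.comap (Submodule.mkQ _)).map C.subtype := by
  set L := (W.comap (Submodule.mkQ _)).map C.subtype
  have hperp : B.orthogonal C ≤ L := by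
    rw [← inf_eq_right.mpr hcois, ← Submodule.map_comap_subtype]
    exact Submodule.map_mono (Submodule.le_comap_mkQ _ W)
  have hLC : B.orthogonal L ≤ C :=
    (orthogonal_le hperp).trans (orthogonal_orthogonal hnd hrefl C).le
  have hmem (y : C) : (y : V) ∈ B.orthogonal L ↔ (y : V) ∈ L := by
    rw [coe_mem_orthogonal_map_subtype_comap_mkQ_iff hB', hW,
      Submodule.coe_mem_map_subtype_comap_mkQ_iff]
    rfl
  ext x
  constructor
  · intro hx
    lift x to C using hLC hx
    exact (hmem x).mp hx
  · intro hx
    lift x to C using Submodule.map_subtype_le C _ hx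
    exact (hmem x).mpr hx

end

end LinearMap.BilinForm

theorem lagrangian_complement_lift_general
    {D : Type*} [LieRing D] [LieAlgebra ℝ D] [FiniteDimensional ℝ D]
    (B : LinearMap.BilinForm ℝ D) (hsymm : B.IsSymm) (hnondeg : B.Nondegenerate)
    (c h : LieSubalgebra ℝ D)
    (hcois : B.orthogonal c.toSubmodule ≤ c.toSubmodule)
    -- the induced bilinear form on the reduction 𝔡_𝔠 = 𝔠/𝔠⊥ :
    (B' : LinearMap.BilinForm ℝ (c.toSubmodule ⧸ cperpIn B c))
    (hB' : ∀ x y : c.toSubmodule,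
      B' (Submodule.Quotient.mk x) (Submodule.Quotient.mk y) = B (x : D) (y : D))
    -- a Lagrangian subspace `W` of the reduction, complementary to `𝔥_𝔠` :
    (W : Submodule ℝ (c.toSubmodule ⧸ cperpIn B c))
    (hWlag : B'.orthogonal W = W)
    (hcompl : IsCompl W
      (Submodule.map (cperpIn B c).mkQ
        ((h.toSubmodule ⊓ c.toSubmodule).comap c.toSubmodule.subtype))) :
    -- (a) the preimage `𝔨′` of `W` in `𝔠` is a Lagrangian subspace of `𝔡` :
    B.orthogonal
        (Submodule.map c.toSubmodule.subtype (W.comap (cperpIn B c).mkQ))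
      = Submodule.map c.toSubmodule.subtype (W.comap (cperpIn B c).mkQ) ∧
    -- (b) `𝔥 + 𝔨′ = 𝔥 + 𝔠` :
    h.toSubmodule ⊔ Submodule.map c.toSubmodule.subtype (W.comap (cperpIn B c).mkQ)
      = h.toSubmodule ⊔ c.toSubmodule ∧
    -- (c) `𝔥 ∩ 𝔨′ = 𝔥 ∩ 𝔠⊥` :
    h.toSubmodule ⊓ Submodule.map c.toSubmodule.subtype (W.comap (cperpIn B c).mkQ)
      = h.toSubmodule ⊓ B.orthogonal c.toSubmodule := by
  refine ⟨LinearMap.BilinForm.orthogonal_map_subtype_comap_mkQ_eq_self hnondeg hsymm.isRefl hcois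
    hB' hWlag, Submodule.sup_map_subtype_comap_mkQ hcompl.sup_eq_top, ?_⟩
  rw [Submodule.inf_map_subtype_comap_mkQ hcompl.disjoint, cperpIn, Submodule.map_comap_subtype,
    inf_eq_right.mpr hcois]

/-- Let `𝔡` be a quadratic Lie algebra, `𝔥 ⊆ 𝔡` a Lagrangian Lie subalgebra and
`𝔠 ⊆ 𝔡` a coisotropic Lie subalgebra; let `B'` be the bilinear form induced on `𝔡_𝔠 = 𝔠/𝔠⊥`
and `𝔥_𝔠 = ((𝔥 ∩ 𝔠) + 𝔠⊥)/𝔠⊥ ⊆ 𝔠/𝔠⊥`.  If `W ⊆ 𝔠/𝔠⊥` is a Lagrangian subspace with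
`W ⊕ 𝔥_𝔠 = 𝔠/𝔠⊥` and `𝔨′ ⊆ 𝔠` is the preimage of `W` under `𝔠 → 𝔠/𝔠⊥`, then
(a) `𝔨′` is Lagrangian in `𝔡`; (b) `𝔥 + 𝔨′ = 𝔥 + 𝔠`; (c) `𝔥 ∩ 𝔨′ = 𝔥 ∩ 𝔠⊥`. -/
theorem lagrangian_complement_lift
    {D : Type*} [LieRing D] [LieAlgebra ℝ D] [FiniteDimensional ℝ D]
    (B : LinearMap.BilinForm ℝ D) (hsymm : B.IsSymm) (hnondeg : B.Nondegenerate)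
    (hinv : ∀ x y z : D, B ⁅x, y⁆ z + B y ⁅x, z⁆ = 0)
    (c h : LieSubalgebra ℝ D)
    (hcois : B.orthogonal c.toSubmodule ≤ c.toSubmodule)
    (hlag : B.orthogonal h.toSubmodule = h.toSubmodule)
    -- the induced bilinear form on the reduction 𝔡_𝔠 = 𝔠/𝔠⊥ :
    (B' : LinearMap.BilinForm ℝ (c.toSubmodule ⧸ cperpIn B c))
    (hB' : ∀ x y : c.toSubmodule,
      B' (Submodule.Quotient.mk x) (Submodule.Quotient.mk y) = B (x : D) (y : D))
    -- a Lagrangian subspace `W` of the reduction, complementary to `𝔥_𝔠` :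
    (W : Submodule ℝ (c.toSubmodule ⧸ cperpIn B c))
    (hWlag : B'.orthogonal W = W)
    (hcompl : IsCompl W
      (Submodule.map (cperpIn B c).mkQ
        ((h.toSubmodule ⊓ c.toSubmodule).comap c.toSubmodule.subtype))) :
    -- (a) the preimage `𝔨′` of `W` in `𝔠` is a Lagrangian subspace of `𝔡` :
    B.orthogonal
        (Submodule.map c.toSubmodule.subtype (W.comap (cperpIn B c).mkQ))
      = Submodule.map c.toSubmodule.subtype (W.comap (cperpIn B c).mkQ) ∧
    -- (b) `𝔥 + 𝔨′ = 𝔥 + 𝔠` :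
    h.toSubmodule ⊔ Submodule.map c.toSubmodule.subtype (W.comap (cperpIn B c).mkQ)
      = h.toSubmodule ⊔ c.toSubmodule ∧
    -- (c) `𝔥 ∩ 𝔨′ = 𝔥 ∩ 𝔠⊥` :
    h.toSubmodule ⊓ Submodule.map c.toSubmodule.subtype (W.comap (cperpIn B c).mkQ)
      = h.toSubmodule ⊓ B.orthogonal c.toSubmodule :=
  lagrangian_complement_lift_general B hsymm hnondeg c h hcois B' hB' W hWlag hcompl
end

section
/- Let 𝔤 be a quadratic Lie algebra, let E and V be finite sets, let in, out : E → V be bijections, and let e₁ ≠ e₂ be two distinct elements of E. In the product quadratic Lie algebra (𝔤̄⊕𝔤)^E, let 𝔤_{Γ′} = { e ↦ (ξ_{in(e)}, ξ_{out(e)}) : ξ ∈ 𝔤^V } be the twisted diagonal and let 𝔠 = { z ∈ (𝔤̄⊕𝔤)^E : there exist ξ, η ∈ 𝔤 with z_{e₁} = (ξ,η) and z_{e₂} = (η,ξ) } be the sewing subalgebra. Then: (a) 𝔠 is a coisotropic Lie subalgebra of (𝔤̄⊕𝔤)^E whose orthogonal complement 𝔠⊥ consists of exactly those elements of 𝔠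 whose components at all edges other than e₁ and e₂ vanish; (b) the coordinate projection π : (𝔤̄⊕𝔤)^E → (𝔤̄⊕𝔤)^{E∖{e₁,e₂}} induces an isomorphism of quadratic Lie algebras 𝔠/𝔠⊥ ≅ (𝔤̄⊕𝔤)^{E∖{e₁,e₂}}; (c) under this identification, the reduction ((𝔤_{Γ′} ∩ 𝔠) + 𝔠⊥)/𝔠⊥ corresponds to π(𝔤_{Γ′} ∩ 𝔠) = { e ↦ (ξ_{in(e)}, ξ_{out(e)}) : ξ ∈ 𝔤^V with ξ_{in(e₁)} = ξ_{out(e₂)} and ξ_{in(e₂)} = ξ_{out(e₁)} }, i.e. to the twisted diagonal of the sewn graph. -/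
/-!
On `𝔠` the coordinates at `e₁` and `e₂` are `v` and `v.swap`, and swapping both arguments
negates the form of `𝔤̄ ⊕ 𝔤`; so the form on `𝔠` only sees the edges outside `{e₁, e₂}`, i.e. it
factors through the restriction `π`. This gives `𝔠 ∩ ker π ⊆ 𝔠⊥`. Conversely, pairing an element
of `𝔠⊥` with elements of `𝔠` supported at a single edge `e ∉ {e₁, e₂}`, or of the form
`single e₁ v + single e₂ v.swap`, and using nondegeneracy shows that it vanishes outside
`{e₁, e₂}` and lies in `𝔠`. Since `𝔠⊥ ⊆ ker π`, adding `𝔠⊥` does not change images under `π`.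
-/

section PiProdLie
variable {L M : Type*} [LieRing L] [LieRing M]

instance prodBracket : Bracket (L × M) (L × M) :=
  ⟨fun x y => (⁅x.1, y.1⁆, ⁅x.2, y.2⁆)⟩

instance prodLieRing : LieRing (L × M) where
  add_lie x y z := Prod.ext (add_lie x.1 y.1 z.1) (add_lie x.2 y.2 z.2)
  lie_add x y z := Prod.ext (lie_add x.1 y.1 z.1) (lie_add x.2 y.2 z.2)
  lie_self x := Prod.ext (lie_self x.1) (lie_self x.2)
  leibniz_lie x y z := Prod.ext (leibniz_lie x.1 y.1 z.1) (leibniz_lie x.2 y.2 z.2)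

instance prodLieAlgebra {R : Type*} [CommRing R] [LieAlgebra R L] [LieAlgebra R M] :
    LieAlgebra R (L × M) where
  lie_smul t x y := Prod.ext (lie_smul t x.1 y.1) (lie_smul t x.2 y.2)

variable {ι : Type*} {F : ι → Type*} [∀ i, LieRing (F i)]

instance piBracket : Bracket (∀ i, F i) (∀ i, F i) :=
  ⟨fun x y i => ⁅x i, y i⁆⟩

instance piLieRing : LieRing (∀ i, F i) where
  add_lie x y z := funext fun i => add_lie (x i) (y i) (z i)
  lie_add x y z := funext fun i => lie_add (x i) (y i) (z i)
  lie_self x := funext fun i => lie_self (x i)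
  leibniz_lie x y z := funext fun i => leibniz_lie (x i) (y i) (z i)

instance piLieAlgebra {R : Type*} [CommRing R] [∀ i, LieAlgebra R (F i)] :
    LieAlgebra R (∀ i, F i) where
  lie_smul t x y := funext fun i => lie_smul t (x i) (y i)

end PiProdLie

/-- The bilinear form of `𝔤̄ ⊕ 𝔤`: `⟨(x,y),(x′,y′)⟩ = −⟨x,x′⟩ + ⟨y,y′⟩`. -/
noncomputable def barSumForm {g : Type*} [AddCommGroup g] [Module ℝ g]
    (B : LinearMap.BilinForm ℝ g) : LinearMap.BilinForm ℝ (g × g) :=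
  B.compl₁₂ (LinearMap.snd ℝ g g) (LinearMap.snd ℝ g g)
    - B.compl₁₂ (LinearMap.fst ℝ g g) (LinearMap.fst ℝ g g)

/-- The bilinear form of `(𝔤̄ ⊕ 𝔤)^E`. -/
noncomputable def piBarSumForm {g : Type*} [AddCommGroup g] [Module ℝ g]
    (E : Type*) [Fintype E] (B : LinearMap.BilinForm ℝ g) :
    LinearMap.BilinForm ℝ (E → g × g) :=
  ∑ e : E, (barSumForm B).compl₁₂
    (LinearMap.proj (R := ℝ) (φ := fun _ : E => g × g) e)
    (LinearMap.proj (R := ℝ) (φ := fun _ : E => g × g) e)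

/-- The twisted diagonal `𝔤_Γ′ = { e ↦ (ξ (in e), ξ (out e)) : ξ ∈ 𝔤^V }`. -/
noncomputable def twistedDiagonal {g : Type*} [AddCommGroup g] [Module ℝ g]
    {E V : Type*} (inn out : E → V) : Submodule ℝ (E → g × g) :=
  LinearMap.range (LinearMap.pi fun e =>
    (LinearMap.proj (R := ℝ) (φ := fun _ : V => g) (inn e)).prod
      (LinearMap.proj (R := ℝ) (φ := fun _ : V => g) (out e)))

/-- The sewing subalgebra
`𝔠 = { z : there are ξ, η with z e₁ = (ξ,η) and z e₂ = (η,ξ) }`, i.e. the kernel of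
`z ↦ z e₂ − swap (z e₁)`. -/
noncomputable def sewSub (g : Type*) [AddCommGroup g] [Module ℝ g]
    {E : Type*} (e₁ e₂ : E) : Submodule ℝ (E → g × g) :=
  LinearMap.ker
    ((LinearMap.proj (R := ℝ) (φ := fun _ : E => g × g) e₂)
      - ((LinearMap.snd ℝ g g).prod (LinearMap.fst ℝ g g)).comp
          (LinearMap.proj (R := ℝ) (φ := fun _ : E => g × g) e₁))

/-- The restriction map `(𝔤̄ ⊕ 𝔤)^E → (𝔤̄ ⊕ 𝔤)^{E ∖ {e₁,e₂}}`. -/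
noncomputable def restrictProj (g : Type*) [AddCommGroup g] [Module ℝ g]
    {E : Type*} (e₁ e₂ : E) :
    (E → g × g) →ₗ[ℝ] ({e : E // e ≠ e₁ ∧ e ≠ e₂} → g × g) :=
  LinearMap.funLeft ℝ (g × g) Subtype.val

open Function

lemma Fintype.sum_eq_add_add_sum_subtype_ne {E M : Type*} [Fintype E] [DecidableEq E]
    [AddCommMonoid M] {e₁ e₂ : E} (hne : e₁ ≠ e₂) (f : E → M) :
    ∑ e, f e = f e₁ + f e₂ + ∑ e : {e : E // e ≠ e₁ ∧ e ≠ e₂}, f e.1 := by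
  rw [← Finset.sum_add_sum_compl {e₁, e₂} f, Finset.sum_pair hne]
  congr 1
  exact Finset.sum_subtype _ (fun _ => by simp) f

section Sewing

variable {g : Type*} [AddCommGroup g] [Module ℝ g] (B : LinearMap.BilinForm ℝ g)

lemma barSumForm_apply (v w : g × g) : barSumForm B v w = B v.2 w.2 - B v.1 w.1 := rfl

lemma barSumForm_swap_swap (v w : g × g) :
    barSumForm B v.swap w.swap = -barSumForm B v w := by
  simp only [barSumForm_apply, Prod.fst_swap, Prod.snd_swap]
  abel

lemma barSumForm_swap_left (v w : g × g) :
    barSumForm B v.swap w = -barSumForm B v w.swap := by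
  rw [← barSumForm_swap_swap, Prod.swap_swap]

lemma separatingRight_barSumForm (hB : LinearMap.SeparatingRight B) :
    LinearMap.SeparatingRight (barSumForm B) := by
  intro w hw
  have h₁ : w.1 = 0 := hB _ fun a => by simpa [barSumForm_apply] using hw (a, 0)
  have h₂ : w.2 = 0 := hB _ fun b => by simpa [barSumForm_apply] using hw (0, b)
  exact Prod.ext h₁ h₂

lemma piBarSumForm_apply {E : Type*} [Fintype E] (z w : E → g × g) :
    piBarSumForm E B z w = ∑ e, barSumForm B (z e) (w e) := by
  simp [piBarSumForm]

lemma piBarSumForm_single_left {E : Type*} [Fintype E] [DecidableEq E] (e : E) (v : g × g)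
    (z : E → g × g) : piBarSumForm E B (Pi.single e v) z = barSumForm B v (z e) := by
  rw [piBarSumForm_apply, Fintype.sum_eq_single e fun e' he' => by simp [he']]
  simp

variable {E : Type*} {e₁ e₂ : E}

lemma mem_sewSub {z : E → g × g} : z ∈ sewSub g e₁ e₂ ↔ z e₂ = (z e₁).swap := by
  simp [sewSub, sub_eq_zero, Prod.ext_iff]

lemma single_mem_sewSub [DecidableEq E] {e : E} (he₁ : e ≠ e₁) (he₂ : e ≠ e₂) (v : g × g) :
    Pi.single e v ∈ sewSub g e₁ e₂ := by
  simp [mem_sewSub, Pi.single_eq_of_ne he₁.symm, Pi.single_eq_of_ne he₂.symm]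

lemma single_add_single_swap_mem_sewSub [DecidableEq E] (hne : e₁ ≠ e₂) (v : g × g) :
    Pi.single e₁ v + Pi.single e₂ v.swap ∈ sewSub g e₁ e₂ := by
  simp [mem_sewSub, Pi.single_eq_of_ne hne, Pi.single_eq_of_ne hne.symm]

lemma map_restrictProj_sewSub : (sewSub g e₁ e₂).map (restrictProj g e₁ e₂) = ⊤ := by
  refine Submodule.eq_top_iff'.mpr fun w => ⟨extend Subtype.val w 0, ?_, ?_⟩
  · have hext : ∀ e, (e = e₁ ∨ e = e₂) → extend Subtype.val w 0 e = 0 := by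
      rintro e he
      refine extend_apply' _ _ _ ?_
      rintro ⟨e', rfl⟩
      exact he.elim e'.2.1 e'.2.2
    change extend Subtype.val w 0 ∈ sewSub g e₁ e₂
    rw [mem_sewSub, hext e₁ (.inl rfl), hext e₂ (.inr rfl), Prod.swap_zero]
  · exact funext fun e => Subtype.val_injective.extend_apply w 0 e

lemma restrictProj_lie {L : Type*} [LieRing L] [LieAlgebra ℝ L] (z w : E → L × L) :
    restrictProj L e₁ e₂ ⁅z, w⁆ = ⁅restrictProj L e₁ e₂ z, restrictProj L e₁ e₂ w⁆ := rfl

lemma lie_mem_sewSub {L : Type*} [LieRing L] [LieAlgebra ℝ L] {z w : E → L × L}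
    (hz : z ∈ sewSub L e₁ e₂) (hw : w ∈ sewSub L e₁ e₂) : ⁅z, w⁆ ∈ sewSub L e₁ e₂ := by
  rw [mem_sewSub] at hz hw ⊢
  change (⁅(z e₂).1, (w e₂).1⁆, ⁅(z e₂).2, (w e₂).2⁆) = _
  rw [hz, hw]
  rfl

lemma mem_twistedDiagonal {V : Type*} {inn out : E → V} {z : E → g × g} :
    z ∈ twistedDiagonal (g := g) inn out ↔ ∃ ξ : V → g, z = fun e => (ξ (inn e), ξ (out e)) :=
  exists_congr fun _ => eq_comm

lemma coe_map_restrictProj_twistedDiagonal_inf_sewSub {V : Type*} (inn out : E → V) :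
    ((twistedDiagonal (g := g) inn out ⊓ sewSub g e₁ e₂).map (restrictProj g e₁ e₂) : Set _)
      = { w : {e : E // e ≠ e₁ ∧ e ≠ e₂} → g × g |
          ∃ ξ : V → g, ξ (inn e₁) = ξ (out e₂) ∧ ξ (inn e₂) = ξ (out e₁) ∧
            ∀ e', w e' = (ξ (inn e'.1), ξ (out e'.1)) } := by
  ext w
  simp only [SetLike.mem_coe, Submodule.mem_map, Submodule.mem_inf, mem_twistedDiagonal,
    Set.mem_ofPred_eq]
  constructor
  · rintro ⟨_, ⟨⟨ξ, rfl⟩, hc⟩, rfl⟩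
    rw [mem_sewSub, Prod.swap_prod_mk, Prod.mk.injEq] at hc
    exact ⟨ξ, hc.2.symm, hc.1, fun _ => rfl⟩
  · rintro ⟨ξ, h₁, h₂, hw⟩
    refine ⟨_, ⟨⟨ξ, rfl⟩, ?_⟩, funext fun e => (hw e).symm⟩
    rw [mem_sewSub, Prod.swap_prod_mk, h₁, h₂]

variable [Fintype E] [DecidableEq E]

lemma piBarSumForm_restrictProj (hne : e₁ ≠ e₂) {z w : E → g × g}
    (hz : z ∈ sewSub g e₁ e₂) (hw : w ∈ sewSub g e₁ e₂) :
    piBarSumForm E B z w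
      = piBarSumForm {e : E // e ≠ e₁ ∧ e ≠ e₂} B
          (restrictProj g e₁ e₂ z) (restrictProj g e₁ e₂ w) := by
  rw [mem_sewSub] at hz hw
  rw [piBarSumForm_apply, piBarSumForm_apply, Fintype.sum_eq_add_add_sum_subtype_ne hne, hz, hw,
    barSumForm_swap_swap, add_neg_cancel, zero_add]
  rfl

lemma apply_eq_zero_of_mem_orthogonal_sewSub (hB : LinearMap.SeparatingRight B)
    {z : E → g × g} (hz : z ∈ (piBarSumForm E B).orthogonal (sewSub g e₁ e₂))
    {e : E} (he₁ : e ≠ e₁) (he₂ : e ≠ e₂) : z e = 0 := by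
  refine separatingRight_barSumForm B hB _ fun v => ?_
  rw [← piBarSumForm_single_left]
  exact hz _ (single_mem_sewSub he₁ he₂ v)

lemma mem_sewSub_of_mem_orthogonal_sewSub (hB : LinearMap.SeparatingRight B) (hne : e₁ ≠ e₂)
    {z : E → g × g} (hz : z ∈ (piBarSumForm E B).orthogonal (sewSub g e₁ e₂)) :
    z ∈ sewSub g e₁ e₂ := by
  -- pairing `z` with `single e₁ v + single e₂ v.swap` gives `⟨v, z e₁ - (z e₂).swap⟩`
  have h : z e₁ - (z e₂).swap = 0 := separatingRight_barSumForm B hB _ fun v => by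
    have := hz _ (single_add_single_swap_mem_sewSub hne v)
    rw [map_add, LinearMap.add_apply, piBarSumForm_single_left,
      piBarSumForm_single_left, barSumForm_swap_left] at this
    rwa [map_sub, sub_eq_add_neg]
  rw [mem_sewSub, sub_eq_zero.mp h, Prod.swap_swap]

lemma orthogonal_sewSub (hB : LinearMap.SeparatingRight B) (hne : e₁ ≠ e₂) :
    (piBarSumForm E B).orthogonal (sewSub g e₁ e₂)
      = sewSub g e₁ e₂ ⊓ LinearMap.ker (restrictProj g e₁ e₂) := by
  ext z
  constructor
  · intro hz
    exact ⟨mem_sewSub_of_mem_orthogonal_sewSub B hB hne hz, funext fun e =>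
      apply_eq_zero_of_mem_orthogonal_sewSub B hB hz e.2.1 e.2.2⟩
  · rintro ⟨hzc, hzk⟩ w hw
    rw [piBarSumForm_restrictProj B hne hw hzc,
      LinearMap.mem_ker.mp hzk, map_zero]

lemma map_restrictProj_sup_orthogonal_sewSub (hB : LinearMap.SeparatingRight B)
    (hne : e₁ ≠ e₂) (T : Submodule ℝ (E → g × g)) :
    (T ⊔ (piBarSumForm E B).orthogonal (sewSub g e₁ e₂)).map (restrictProj g e₁ e₂)
      = T.map (restrictProj g e₁ e₂) := by
  have hker := orthogonal_sewSub B hB hne ▸ inf_le_right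
  rw [Submodule.map_sup, LinearMap.le_ker_iff_map.mp hker, sup_bot_eq]

end Sewing

theorem sewing_reduction_general
    {g : Type*} [LieRing g] [LieAlgebra ℝ g]
    (B : LinearMap.BilinForm ℝ g) (hnondeg : B.Nondegenerate)
    {E V : Type*} [Fintype E] [DecidableEq E]
    (inn out : E → V)
    (e₁ e₂ : E) (hne : e₁ ≠ e₂) :
    -- (a) `𝔠` is a Lie subalgebra,
    (∀ z ∈ sewSub g e₁ e₂, ∀ w ∈ sewSub g e₁ e₂, ⁅z, w⁆ ∈ sewSub g e₁ e₂) ∧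
    -- coisotropic, with `𝔠⊥ = 𝔠 ∩ ker π` (elements supported on `{e₁, e₂}`):
    (piBarSumForm E B).orthogonal (sewSub g e₁ e₂)
      = sewSub g e₁ e₂ ⊓ LinearMap.ker (restrictProj g e₁ e₂) ∧
    -- (b) `π` restricted to `𝔠` is surjective, preserves brackets, and preserves the forms
    -- on `𝔠` (together with (a), whose kernel statement it complements, this says that `π`
    -- induces an isomorphism of quadratic Lie algebras `𝔠/𝔠⊥ ≅ (𝔤̄⊕𝔤)^{E∖{e₁,e₂}}`):
    Submodule.map (restrictProj g e₁ e₂) (sewSub g e₁ e₂) = ⊤ ∧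
    (∀ z w : E → g × g,
      restrictProj g e₁ e₂ ⁅z, w⁆ = ⁅restrictProj g e₁ e₂ z, restrictProj g e₁ e₂ w⁆) ∧
    (∀ z ∈ sewSub g e₁ e₂, ∀ w ∈ sewSub g e₁ e₂,
      piBarSumForm E B z w
        = piBarSumForm {e : E // e ≠ e₁ ∧ e ≠ e₂} B
            (restrictProj g e₁ e₂ z) (restrictProj g e₁ e₂ w)) ∧
    -- (c) under this identification the reduction of the twisted diagonal is `π(𝔤_Γ′ ∩ 𝔠)`,
    Submodule.map (restrictProj g e₁ e₂)
        ((twistedDiagonal (g := g) inn out ⊓ sewSub g e₁ e₂)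
          ⊔ (piBarSumForm E B).orthogonal (sewSub g e₁ e₂))
      = Submodule.map (restrictProj g e₁ e₂)
          (twistedDiagonal (g := g) inn out ⊓ sewSub g e₁ e₂) ∧
    -- which is exactly the twisted diagonal of the sewn graph:
    (Submodule.map (restrictProj g e₁ e₂)
          (twistedDiagonal (g := g) inn out ⊓ sewSub g e₁ e₂) : Set _)
      = { w : {e : E // e ≠ e₁ ∧ e ≠ e₂} → g × g |
          ∃ ξ : V → g, ξ (inn e₁) = ξ (out e₂) ∧ ξ (inn e₂) = ξ (out e₁) ∧
            ∀ e' : {e : E // e ≠ e₁ ∧ e ≠ e₂},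
              w e' = (ξ (inn e'.1), ξ (out e'.1)) } := by
  exact ⟨fun _ hz _ hw => lie_mem_sewSub hz hw,
    orthogonal_sewSub B hnondeg.2 hne,
    map_restrictProj_sewSub,
    restrictProj_lie,
    fun _ hz _ hw => piBarSumForm_restrictProj B hne hz hw,
    map_restrictProj_sup_orthogonal_sewSub B hnondeg.2 hne _,
    coe_map_restrictProj_twistedDiagonal_inf_sewSub inn out⟩

/-- sewing two edges of a permutation graph.  With `𝔠` the sewing subalgebra of
`(𝔤̄ ⊕ 𝔤)^E` and `𝔤_Γ′` the twisted diagonal of a permutation graph `(E,V,in,out)`: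
(a) `𝔠` is a coisotropic Lie subalgebra whose orthogonal complement consists of exactly the
elements of `𝔠` vanishing at all edges other than `e₁, e₂`;
(b) the projection `π` induces an isomorphism of quadratic Lie algebras
`𝔠/𝔠⊥ ≅ (𝔤̄ ⊕ 𝔤)^{E∖{e₁,e₂}}`;
(c) the reduction `((𝔤_Γ′ ∩ 𝔠) + 𝔠⊥)/𝔠⊥` corresponds to `π(𝔤_Γ′ ∩ 𝔠)`, the twisted
diagonal of the sewn graph. -/
theorem sewing_reduction
    {g : Type*} [LieRing g] [LieAlgebra ℝ g] [FiniteDimensional ℝ g]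
    (B : LinearMap.BilinForm ℝ g) (hsymm : B.IsSymm) (hnondeg : B.Nondegenerate)
    (hinv : ∀ x y z : g, B ⁅x, y⁆ z + B y ⁅x, z⁆ = 0)
    {E V : Type*} [Fintype E] [Fintype V] [DecidableEq E]
    (inn out : E → V) (hin : Function.Bijective inn) (hout : Function.Bijective out)
    (e₁ e₂ : E) (hne : e₁ ≠ e₂) :
    -- (a) `𝔠` is a Lie subalgebra,
    (∀ z ∈ sewSub g e₁ e₂, ∀ w ∈ sewSub g e₁ e₂, ⁅z, w⁆ ∈ sewSub g e₁ e₂) ∧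
    -- coisotropic, with `𝔠⊥ = 𝔠 ∩ ker π` (elements supported on `{e₁, e₂}`):
    (piBarSumForm E B).orthogonal (sewSub g e₁ e₂)
      = sewSub g e₁ e₂ ⊓ LinearMap.ker (restrictProj g e₁ e₂) ∧
    -- (b) `π` restricted to `𝔠` is surjective, preserves brackets, and preserves the forms
    -- on `𝔠` (together with (a), whose kernel statement it complements, this says that `π`
    -- induces an isomorphism of quadratic Lie algebras `𝔠/𝔠⊥ ≅ (𝔤̄⊕𝔤)^{E∖{e₁,e₂}}`):
    Submodule.map (restrictProj g e₁ e₂) (sewSub g e₁ e₂) = ⊤ ∧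
    (∀ z w : E → g × g,
      restrictProj g e₁ e₂ ⁅z, w⁆ = ⁅restrictProj g e₁ e₂ z, restrictProj g e₁ e₂ w⁆) ∧
    (∀ z ∈ sewSub g e₁ e₂, ∀ w ∈ sewSub g e₁ e₂,
      piBarSumForm E B z w
        = piBarSumForm {e : E // e ≠ e₁ ∧ e ≠ e₂} B
            (restrictProj g e₁ e₂ z) (restrictProj g e₁ e₂ w)) ∧
    -- (c) under this identification the reduction of the twisted diagonal is `π(𝔤_Γ′ ∩ 𝔠)`,
    Submodule.map (restrictProj g e₁ e₂)
        ((twistedDiagonal (g := g) inn out ⊓ sewSub g e₁ e₂)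
          ⊔ (piBarSumForm E B).orthogonal (sewSub g e₁ e₂))
      = Submodule.map (restrictProj g e₁ e₂)
          (twistedDiagonal (g := g) inn out ⊓ sewSub g e₁ e₂) ∧
    -- which is exactly the twisted diagonal of the sewn graph:
    (Submodule.map (restrictProj g e₁ e₂)
          (twistedDiagonal (g := g) inn out ⊓ sewSub g e₁ e₂) : Set _)
      = { w : {e : E // e ≠ e₁ ∧ e ≠ e₂} → g × g |
          ∃ ξ : V → g, ξ (inn e₁) = ξ (out e₂) ∧ ξ (inn e₂) = ξ (out e₁) ∧
            ∀ e' : {e : E // e ≠ e₁ ∧ e ≠ e₂},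
              w e' = (ξ (inn e'.1), ξ (out e'.1)) } :=
  sewing_reduction_general B hnondeg inn out e₁ e₂ hne
end

section
/- Let 𝔤 be a quadratic Lie algebra and 𝔠 ⊆ 𝔤 a coisotropic Lie subalgebra. Then 𝔩_𝔠 := { (ξ,η) ∈ 𝔤⊕𝔤 : ξ ∈ 𝔠, η ∈ 𝔠, and ξ − η ∈ 𝔠⊥ } is a Lagrangian Lie subalgebra of the quadratic Lie algebra 𝔤̄⊕𝔤, and it is symmetric, i.e. invariant under the involution (ξ,η) ↦ (η,ξ). -/
/-- The subalgebra `𝔩_𝔠 = {(ξ,η) : ξ,η ∈ 𝔠, ξ − η ∈ 𝔠⊥} ⊆ 𝔤̄ ⊕ 𝔤`. -/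
noncomputable def lCois {g : Type*} [LieRing g] [LieAlgebra ℝ g]
    (B : LinearMap.BilinForm ℝ g) (c : LieSubalgebra ℝ g) : Submodule ℝ (g × g) :=
  (c.toSubmodule.comap (LinearMap.fst ℝ g g)) ⊓
    (c.toSubmodule.comap (LinearMap.snd ℝ g g)) ⊓
    ((B.orthogonal c.toSubmodule).comap (LinearMap.fst ℝ g g - LinearMap.snd ℝ g g))

lemma LinearMap.BilinForm.lie_mem_orthogonal {R L : Type*} [CommRing R] [LieRing L]
    [LieAlgebra R L] {Φ : LinearMap.BilinForm R L} (hΦ : Φ.lieInvariant L)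
    {c : LieSubalgebra R L} {a b : L} (ha : a ∈ c) (hb : b ∈ Φ.orthogonal c.toSubmodule) :
    ⁅a, b⁆ ∈ Φ.orthogonal c.toSubmodule := by
  intro n hn
  have hna : Φ ⁅a, n⁆ b = 0 := hb _ (c.lie_mem ha hn)
  show Φ n ⁅a, b⁆ = 0
  rwa [hΦ, neg_eq_zero] at hna

lemma LinearMap.BilinForm.lie_mem_orthogonal' {R L : Type*} [CommRing R] [LieRing L]
    [LieAlgebra R L] {Φ : LinearMap.BilinForm R L} (hΦ : Φ.lieInvariant L)
    {c : LieSubalgebra R L} {a b : L} (ha : a ∈ c) (hb : b ∈ Φ.orthogonal c.toSubmodule) :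
    ⁅b, a⁆ ∈ Φ.orthogonal c.toSubmodule := by
  rw [← lie_skew]
  exact neg_mem (lie_mem_orthogonal hΦ ha hb)

section lCois

variable {g : Type*} [LieRing g] [LieAlgebra ℝ g] {B : LinearMap.BilinForm ℝ g}
  {c : LieSubalgebra ℝ g}

lemma mem_lCois_iff {p : g × g} :
    p ∈ lCois B c ↔ p.1 ∈ c ∧ p.2 ∈ c ∧ p.1 - p.2 ∈ B.orthogonal c.toSubmodule := by
  simp [lCois, and_assoc]

lemma barSumForm_apply_s8 (p q : g × g) : barSumForm B p q = B p.2 q.2 - B p.1 q.1 := by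
  simp [barSumForm]

lemma swap_mem_lCois {p : g × g} (hp : p ∈ lCois B c) : p.swap ∈ lCois B c := by
  obtain ⟨h1, h2, hdiff⟩ := mem_lCois_iff.mp hp
  refine mem_lCois_iff.mpr ⟨h2, h1, ?_⟩
  rw [Prod.fst_swap, Prod.snd_swap, ← neg_sub]
  exact neg_mem hdiff

lemma lie_mem_lCois (hB : B.lieInvariant g) {p q : g × g} (hp : p ∈ lCois B c)
    (hq : q ∈ lCois B c) : ⁅p, q⁆ ∈ lCois B c := by
  obtain ⟨hp1, hp2, hpdiff⟩ := mem_lCois_iff.mp hp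
  obtain ⟨hq1, hq2, hqdiff⟩ := mem_lCois_iff.mp hq
  refine mem_lCois_iff.mpr ⟨c.lie_mem hp1 hq1, c.lie_mem hp2 hq2, ?_⟩
  have hsplit : ⁅p.1, q.1⁆ - ⁅p.2, q.2⁆ = ⁅p.1 - p.2, q.1⁆ + ⁅p.2, q.1 - q.2⁆ := by
    rw [sub_lie, lie_sub]; abel
  show ⁅p.1, q.1⁆ - ⁅p.2, q.2⁆ ∈ _
  rw [hsplit]
  exact add_mem (B.lie_mem_orthogonal' hB hq1 hpdiff) (B.lie_mem_orthogonal hB hp2 hqdiff)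

lemma lCois_le_orthogonal_lCois (hB : B.IsSymm) :
    lCois B c ≤ (barSumForm B).orthogonal (lCois B c) := by
  intro q hq p hp
  obtain ⟨hp1, -, hpdiff⟩ := mem_lCois_iff.mp hp
  obtain ⟨-, hq2, hqdiff⟩ := mem_lCois_iff.mp hq
  have h1 : B p.1 (q.1 - q.2) = 0 := hqdiff _ hp1
  have h2 : B q.2 (p.1 - p.2) = 0 := hpdiff _ hq2
  show barSumForm B p q = 0
  rw [map_sub, ← hB.eq q.2 p.1] at h1
  rw [map_sub] at h2
  rw [barSumForm_apply_s8, ← hB.eq q.2 p.2]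
  linarith

lemma orthogonal_lCois_le [FiniteDimensional ℝ g] (hrefl : B.IsRefl) (hnondeg : B.Nondegenerate)
    (hcois : B.orthogonal c.toSubmodule ≤ c.toSubmodule) :
    (barSumForm B).orthogonal (lCois B c) ≤ lCois B c := by
  intro p hp
  have hdiff : p.1 - p.2 ∈ B.orthogonal c.toSubmodule := by
    intro n hn
    have h := hp (n, n) (mem_lCois_iff.mpr ⟨hn, hn, by simp⟩)
    rw [barSumForm_apply_s8] at h
    show B n (p.1 - p.2) = 0
    rw [map_sub]
    linarith
  have h1 : p.1 ∈ B.orthogonal (B.orthogonal c.toSubmodule) := by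
    intro ζ hζ
    have h := hp (ζ, 0) (mem_lCois_iff.mpr ⟨hcois hζ, c.zero_mem, by simpa using hζ⟩)
    rw [barSumForm_apply_s8] at h
    simpa using h
  rw [B.orthogonal_orthogonal hnondeg hrefl] at h1
  refine mem_lCois_iff.mpr ⟨h1, ?_, hdiff⟩
  rw [← sub_sub_cancel p.1 p.2]
  exact c.toSubmodule.sub_mem h1 (hcois hdiff)

end lCois

/-- For a quadratic Lie algebra `𝔤` and a coisotropic Lie subalgebra `𝔠 ⊆ 𝔤`,
`𝔩_𝔠 = {(ξ,η) : ξ,η ∈ 𝔠, ξ − η ∈ 𝔠⊥}` is a Lagrangian Lie subalgebra of `𝔤̄ ⊕ 𝔤`, and it is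
symmetric, i.e. invariant under `(ξ,η) ↦ (η,ξ)`. -/
theorem lCois_lagrangian_symmetric
    {g : Type*} [LieRing g] [LieAlgebra ℝ g] [FiniteDimensional ℝ g]
    (B : LinearMap.BilinForm ℝ g) (hsymm : B.IsSymm) (hnondeg : B.Nondegenerate)
    (hinv : ∀ x y z : g, B ⁅x, y⁆ z + B y ⁅x, z⁆ = 0)
    (c : LieSubalgebra ℝ g)
    (hcois : B.orthogonal c.toSubmodule ≤ c.toSubmodule) :
    -- `𝔩_𝔠` is a Lie subalgebra of `𝔤̄ ⊕ 𝔤` (closed under the componentwise bracket),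
    (∀ p ∈ lCois B c, ∀ q ∈ lCois B c, ⁅p, q⁆ ∈ lCois B c) ∧
    -- it is Lagrangian,
    (barSumForm B).orthogonal (lCois B c) = lCois B c ∧
    -- and it is symmetric.
    (∀ p : g × g, p ∈ lCois B c → (p.2, p.1) ∈ lCois B c) := by
  have hB : B.lieInvariant g := fun x y z => eq_neg_of_add_eq_zero_left (hinv x y z)
  exact ⟨fun p hp q hq => lie_mem_lCois hB hp hq,
    le_antisymm (orthogonal_lCois_le hsymm.isRefl hnondeg hcois) (lCois_le_orthogonal_lCois hsymm),
    fun p hp => swap_mem_lCois hp⟩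
end
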